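/- There exist constants C₀ ≥ 1 and C > 0 such that the following holds. Let N₁, N₂ ∈ 2^ℕ with N₁ ≥ C₀ N₂, and let u₀, v₀ : 𝕋 → ℂ satisfy supp(û₀) ⊆ {k ∈ ℤ : N₁/2 ≤ |k| ≤ 2N₁} and supp(v̂₀) ⊆ {k ∈ ℤ : N₂/2 ≤ |k| ≤ 2N₂}. Then ‖ e^{itΔ}u₀ · e^{itΔ}v₀ ‖_{L²([0,N₁^{-1}]×𝕋)} ≤ C N₁^{-1/2} ‖u₀‖_{L²(𝕋)} ‖v₀‖_{L²(𝕋)}. -/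

import Mathlib

open MeasureTheory Real

noncomputable section

/-- Periodic Schrödinger evolution on `𝕋 = ℝ/(2πℤ)` of the function with
Fourier coefficients `a`. -/
def evol (a : ℤ → ℂ) (t x : ℝ) : ℂ :=
  ∑' k : ℤ, a k * Complex.exp (Complex.I * (((k : ℝ) * x - t * (k : ℝ) ^ 2 : ℝ) : ℂ))

/-- Square of the `L²(𝕋)` norm of the function with Fourier coefficients `a`. -/
def l2nsq (a : ℤ → ℂ) : ℝ :=
  ∫ x in Set.Ioc (0 : ℝ) (2 * π), ‖evol a 0 x‖ ^ 2

/-!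
Expanding in `x` by Parseval, `∫ |u v|² dx = 2π ∑ₘ |Bₘ(t)|²`, where `Bₘ(t)` collects the pairs
`(k, l)` with `k + l = m`, each oscillating in time at frequency `-(k² + l²)`. On `[0, T]`, `T = 1/N₁`,
the indicator is dominated by `e · exp (-(t/T)²)`, whose Fourier transform is again Gaussian, so
`∫₀ᵀ |Bₘ|²` is at most `e √π T` times a quadratic form with kernel `exp (-(T Δ)² / 4)`, `Δ` the gap
between time frequencies, and Schur's test reduces it to the row sums of this kernel. Within a fiber
`k + l = k' + l'` the gap factors as `Δ = 2 (l' - l) (l' - k)`, and `|l' - k| ≥ N₁ / 4` because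
`|k| ≥ N₁ / 2` while `|l'| ≤ 2 N₂ ≤ N₁ / 4`. Hence `T |Δ| ≥ |l' - l| / 2`, and every row sum is at
most `∑_{d ∈ ℤ} exp (-d² / 16)`, uniformly in `N₁` and `N₂`.
-/

open Complex ComplexConjugate Finset

lemma ofReal_norm_sum_sq {ι : Type*} (s : Finset ι) (z : ι → ℂ) :
    ((‖∑ i ∈ s, z i‖ ^ 2 : ℝ) : ℂ) = ∑ i ∈ s, ∑ j ∈ s, z i * conj (z j) := by
  rw [← normSq_eq_norm_sq, ← mul_conj, map_sum, sum_mul_sum]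

lemma mul_cexp_mul_conj (a b : ℂ) (θ θ' : ℝ) :
    a * cexp (θ * I) * conj (b * cexp (θ' * I)) = a * conj b * cexp ((θ - θ' : ℝ) * I) := by
  rw [map_mul, ← exp_conj, map_mul, conj_ofReal, conj_I, ofReal_sub, sub_mul, sub_eq_add_neg,
    Complex.exp_add, mul_neg]
  ring

lemma integral_cexp_int_mul_I (m : ℤ) :
    ∫ x in (0 : ℝ)..2 * π, cexp ((m * x : ℝ) * I) = if m = 0 then (2 * π : ℂ) else 0 := by
  split_ifs with hm
  · simp [hm]
  · have hc : (m : ℂ) * I ≠ 0 := by simp [hm, I_ne_zero]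
    simp only [ofReal_mul, ofReal_intCast, mul_right_comm _ _ I]
    rw [integral_exp_mul_complex hc]
    have h2π : (m : ℂ) * I * ↑(2 * π) = m * (2 * π * I) := by push_cast; ring
    rw [h2π, exp_int_mul_two_pi_mul_I]
    simp

theorem integral_norm_sq_sum_fourier (s : Finset ℤ) (b : ℤ → ℂ) :
    ∫ x in (0 : ℝ)..2 * π, ‖∑ m ∈ s, b m * cexp ((m * x : ℝ) * I)‖ ^ 2
      = 2 * π * ∑ m ∈ s, ‖b m‖ ^ 2 := by
  have hint (m m' : ℤ) : IntervalIntegrable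
      (fun x : ℝ ↦ b m * conj (b m') * cexp ((((m - m' : ℤ) : ℝ) * x : ℝ) * I)) volume 0 (2 * π) :=
    (by fun_prop : Continuous _).intervalIntegrable _ _
  apply ofReal_injective
  rw [← intervalIntegral.integral_ofReal]
  simp_rw [ofReal_norm_sum_sq, mul_cexp_mul_conj, ← sub_mul, ← Int.cast_sub]
  rw [intervalIntegral.integral_finsetSum fun m _ ↦
    (by fun_prop : Continuous _).intervalIntegrable _ _]
  simp_rw [intervalIntegral.integral_finsetSum fun m' _ ↦ hint _ m',
    intervalIntegral.integral_const_mul, integral_cexp_int_mul_I, sub_eq_zero]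
  simp [mul_sum, mul_conj, normSq_eq_norm_sq, mul_comm]

theorem integral_norm_sq_sum_fourier_fiberwise {ι : Type*} (s : Finset ι) (n : ι → ℤ) (c : ι → ℂ) :
    ∫ x in (0 : ℝ)..2 * π, ‖∑ i ∈ s, c i * cexp ((n i * x : ℝ) * I)‖ ^ 2
      = 2 * π * ∑ m ∈ s.image n, ‖∑ i ∈ s with n i = m, c i‖ ^ 2 := by
  have hfib (x : ℝ) : ∑ i ∈ s, c i * cexp ((n i * x : ℝ) * I)
      = ∑ m ∈ s.image n, (∑ i ∈ s with n i = m, c i) * cexp ((m * x : ℝ) * I) := by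
    rw [← sum_fiberwise_of_maps_to fun i hi ↦ mem_image_of_mem n hi]
    refine sum_congr rfl fun m _ ↦ ?_
    rw [sum_mul]
    refine sum_congr rfl fun i hi ↦ ?_
    rw [(mem_filter.mp hi).2]
  simp_rw [hfib, integral_norm_sq_sum_fourier]

lemma integral_gaussian_mul_cexp {T : ℝ} (hT : 0 < T) (μ : ℝ) :
    ∫ t : ℝ, (rexp (-(t / T) ^ 2) : ℂ) * cexp ((μ * t : ℝ) * I)
      = (√π * T * rexp (-(T * μ) ^ 2 / 4) : ℝ) := by
  have hb : 0 < (1 / T ^ 2 : ℂ).re := by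
    norm_cast; positivity
  have hcpow : (π / (1 / T ^ 2 : ℂ)) ^ (1 / 2 : ℂ) = (√π * T : ℝ) := by
    rw [show π / (1 / T ^ 2 : ℂ) = (π * T ^ 2 : ℝ) by push_cast; field_simp,
      show (1 / 2 : ℂ) = ((1 / 2 : ℝ) : ℂ) by push_cast; rfl, ← ofReal_cpow (by positivity),
      ← sqrt_eq_rpow, sqrt_mul pi_pos.le, sqrt_sq hT.le]
  convert fourierIntegral_gaussian hb μ using 1
  · congr 1 with t
    rw [ofReal_exp, mul_comm, ← Complex.exp_add, ← Complex.exp_add]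
    congr 1
    push_cast
    field_simp
  · rw [hcpow, ofReal_mul, ofReal_exp]
    congr 2
    push_cast
    field_simp

lemma integrable_gaussian_mul_cexp {T : ℝ} (hT : 0 < T) (μ : ℝ) :
    Integrable fun t : ℝ ↦ (rexp (-(t / T) ^ 2) : ℂ) * cexp ((μ * t : ℝ) * I) := by
  have hg : Integrable fun t : ℝ ↦ rexp (-(1 / T ^ 2) * t ^ 2) :=
    integrable_exp_neg_mul_sq (by positivity)
  refine (hg.ofReal.congr (.of_forall fun t ↦ ?_)).mul_bdd (c := 1) (by fun_prop)
    (.of_forall fun t ↦ (norm_exp_ofReal_mul_I _).le)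
  dsimp only
  congr 2
  field_simp

lemma sum_sum_mul_mul_le_of_sum_le {ι : Type*} (P : Finset ι) (x : ι → ℝ) (g : ι → ι → ℝ)
    {K : ℝ} (hg : ∀ p q, 0 ≤ g p q) (hsymm : ∀ p q, g p q = g q p)
    (hrow : ∀ p ∈ P, ∑ q ∈ P, g p q ≤ K) :
    ∑ p ∈ P, ∑ q ∈ P, x p * x q * g p q ≤ K * ∑ p ∈ P, x p ^ 2 := by
  have hamgm (p q : ι) : x p * x q * g p q ≤ (x p ^ 2 * g p q + x q ^ 2 * g q p) / 2 := by
    rw [hsymm q p]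
    nlinarith [mul_nonneg (sq_nonneg (x p - x q)) (hg p q)]
  have hswap : ∑ p ∈ P, ∑ q ∈ P, x q ^ 2 * g q p = ∑ p ∈ P, ∑ q ∈ P, x p ^ 2 * g p q :=
    sum_comm
  calc ∑ p ∈ P, ∑ q ∈ P, x p * x q * g p q
      ≤ ∑ p ∈ P, ∑ q ∈ P, (x p ^ 2 * g p q + x q ^ 2 * g q p) / 2 :=
        sum_le_sum fun p _ ↦ sum_le_sum fun q _ ↦ hamgm p q
    _ = ∑ p ∈ P, x p ^ 2 * ∑ q ∈ P, g p q := by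
        simp only [← sum_div, sum_add_distrib, hswap, mul_sum]
        ring
    _ ≤ ∑ p ∈ P, x p ^ 2 * K :=
        sum_le_sum fun p hp ↦ mul_le_mul_of_nonneg_left (hrow p hp) (sq_nonneg _)
    _ = K * ∑ p ∈ P, x p ^ 2 := by rw [mul_sum]; simp only [mul_comm]

section GaussianSmoothing

variable {ι : Type*} (P : Finset ι) (A : ι → ℂ) (φ : ι → ℝ) {T : ℝ}

lemma ofReal_gaussian_mul_norm_sq_sum (t : ℝ) :
    ((rexp (-(t / T) ^ 2) * ‖∑ p ∈ P, A p * cexp ((φ p * t : ℝ) * I)‖ ^ 2 : ℝ) : ℂ)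
      = ∑ p ∈ P, ∑ q ∈ P, A p * conj (A q)
          * ((rexp (-(t / T) ^ 2) : ℂ) * cexp (((φ p - φ q) * t : ℝ) * I)) := by
  rw [ofReal_mul, ofReal_norm_sum_sq, mul_sum]
  refine sum_congr rfl fun p _ ↦ ?_
  rw [mul_sum]
  refine sum_congr rfl fun q _ ↦ ?_
  rw [mul_cexp_mul_conj, sub_mul]
  ring

lemma integrable_gaussian_mul_norm_sq_sum (hT : 0 < T) :
    Integrable fun t ↦ rexp (-(t / T) ^ 2) * ‖∑ p ∈ P, A p * cexp ((φ p * t : ℝ) * I)‖ ^ 2 := by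
  have h : Integrable fun t ↦
      ((rexp (-(t / T) ^ 2) * ‖∑ p ∈ P, A p * cexp ((φ p * t : ℝ) * I)‖ ^ 2 : ℝ) : ℂ) := by
    simp_rw [ofReal_gaussian_mul_norm_sq_sum]
    exact integrable_finsetSum _ fun p _ ↦ integrable_finsetSum _ fun q _ ↦
      (integrable_gaussian_mul_cexp hT _).const_mul _
  simpa only [RCLike.re_to_complex, ofReal_re] using h.re

lemma integral_gaussian_mul_norm_sq_sum (hT : 0 < T) :
    ∫ t, rexp (-(t / T) ^ 2) * ‖∑ p ∈ P, A p * cexp ((φ p * t : ℝ) * I)‖ ^ 2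
      = ∑ p ∈ P, ∑ q ∈ P, (A p * conj (A q)).re * (√π * T * rexp (-(T * (φ p - φ q)) ^ 2 / 4)) := by
  have hint (p q : ι) := (integrable_gaussian_mul_cexp hT (φ p - φ q)).const_mul (A p * conj (A q))
  have h : ((∫ t, rexp (-(t / T) ^ 2) * ‖∑ p ∈ P, A p * cexp ((φ p * t : ℝ) * I)‖ ^ 2 : ℝ) : ℂ)
      = ∑ p ∈ P, ∑ q ∈ P, A p * conj (A q) * (√π * T * rexp (-(T * (φ p - φ q)) ^ 2 / 4) : ℝ) := by
    rw [← integral_complex_ofReal]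
    simp_rw [ofReal_gaussian_mul_norm_sq_sum]
    rw [integral_finsetSum _ fun p _ ↦ integrable_finsetSum _ fun q _ ↦ hint p q]
    simp_rw [integral_finsetSum _ fun q _ ↦ hint _ q, integral_const_mul,
      integral_gaussian_mul_cexp hT]
  rw [← ofReal_re (∫ _, _), h]
  simp only [re_sum, re_mul_ofReal]

theorem integral_norm_sq_sum_cexp_le (hT : 0 < T) {K : ℝ}
    (hrow : ∀ p ∈ P, ∑ q ∈ P, rexp (-(T * (φ p - φ q)) ^ 2 / 4) ≤ K) :
    ∫ t in (0 : ℝ)..T, ‖∑ p ∈ P, A p * cexp ((φ p * t : ℝ) * I)‖ ^ 2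
      ≤ rexp 1 * √π * T * K * ∑ p ∈ P, ‖A p‖ ^ 2 := by
  set S : ℝ → ℝ := fun t ↦ ‖∑ p ∈ P, A p * cexp ((φ p * t : ℝ) * I)‖ ^ 2
  set g : ι → ι → ℝ := fun p q ↦ rexp (-(T * (φ p - φ q)) ^ 2 / 4)
  have hS : Continuous S := by fun_prop
  have hweight : ∀ t ∈ Set.Icc 0 T, S t ≤ rexp 1 * (rexp (-(t / T) ^ 2) * S t) := by
    rintro t ⟨ht0, htT⟩
    have : t / T ≤ 1 := div_le_one_of_le₀ htT hT.le
    rw [← mul_assoc, ← Real.exp_add]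
    refine le_mul_of_one_le_left (by positivity) (one_le_exp ?_)
    nlinarith [div_nonneg ht0 hT.le]
  have hre (p q : ι) :
      (A p * conj (A q)).re * (√π * T * g p q) ≤ √π * T * (‖A p‖ * ‖A q‖ * g p q) := by
    have := (re_le_norm (A p * conj (A q))).trans_eq (by rw [norm_mul, norm_conj])
    nlinarith [show 0 ≤ √π * T * g p q by positivity]
  calc ∫ t in (0 : ℝ)..T, S t
      ≤ ∫ t in (0 : ℝ)..T, rexp 1 * (rexp (-(t / T) ^ 2) * S t) :=
        intervalIntegral.integral_mono_on hT.le (hS.intervalIntegrable _ _)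
          ((by fun_prop : Continuous _).intervalIntegrable _ _) hweight
    _ = rexp 1 * ∫ t in Set.Ioc 0 T, rexp (-(t / T) ^ 2) * S t := by
        rw [intervalIntegral.integral_const_mul, intervalIntegral.integral_of_le hT.le]
    _ ≤ rexp 1 * ∫ t, rexp (-(t / T) ^ 2) * S t := by
        refine mul_le_mul_of_nonneg_left ?_ (exp_nonneg 1)
        exact setIntegral_le_integral (integrable_gaussian_mul_norm_sq_sum P A φ hT)
          (.of_forall fun t ↦ by positivity)
    _ = rexp 1 * ∑ p ∈ P, ∑ q ∈ P, (A p * conj (A q)).re * (√π * T * g p q) := by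
        rw [integral_gaussian_mul_norm_sq_sum P A φ hT]
    _ ≤ rexp 1 * (√π * T * ∑ p ∈ P, ∑ q ∈ P, ‖A p‖ * ‖A q‖ * g p q) := by
        refine mul_le_mul_of_nonneg_left ?_ (exp_nonneg 1)
        rw [mul_sum]
        refine sum_le_sum fun p _ ↦ ?_
        rw [mul_sum]
        exact sum_le_sum fun q _ ↦ hre p q
    _ ≤ rexp 1 * (√π * T * (K * ∑ p ∈ P, ‖A p‖ ^ 2)) := by
        gcongr
        refine sum_sum_mul_mul_le_of_sum_le P _ g (fun p q ↦ by positivity) (fun p q ↦ ?_) hrow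
        simp only [g, ← neg_sub (φ q), mul_neg, neg_sq]
    _ = rexp 1 * √π * T * K * ∑ p ∈ P, ‖A p‖ ^ 2 := by ring

end GaussianSmoothing

lemma summable_exp_neg_int_sq_div_sixteen : Summable fun d : ℤ ↦ rexp (-(d : ℝ) ^ 2 / 16) := by
  refine (summable_pow_mul_jacobiTheta₂_term_bound 0 (T := 1 / (16 * π)) (by positivity) 0).congr
    fun d ↦ ?_
  rw [pow_zero, one_mul]
  congr 1
  field_simp
  ring

lemma mul_abs_sub_le_two_mul_abs_sq_add_sq_sub {N₁ N₂ : ℝ} (hN : 8 * N₂ ≤ N₁) {k₁ k₂ l₁ l₂ : ℤ}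
    (hk₁ : N₁ / 2 ≤ |(k₁ : ℝ)|) (hl₂ : |(l₂ : ℝ)| ≤ 2 * N₂) (h : k₁ + k₂ = l₁ + l₂) :
    N₁ * |(l₂ - k₂ : ℝ)| ≤ 2 * |(l₁ : ℝ) ^ 2 + l₂ ^ 2 - (k₁ ^ 2 + k₂ ^ 2)| := by
  have hl₁ : (l₁ : ℝ) = k₁ + k₂ - l₂ := by rw [eq_sub_iff_add_eq]; exact_mod_cast h.symm
  have hfactor : (l₁ : ℝ) ^ 2 + l₂ ^ 2 - (k₁ ^ 2 + k₂ ^ 2) = 2 * (l₂ - k₂) * (l₂ - k₁) := by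
    rw [hl₁]; ring
  have hsep : N₁ / 4 ≤ |(l₂ - k₁ : ℝ)| := by
    have := abs_sub_abs_le_abs_sub (k₁ : ℝ) l₂
    rw [abs_sub_comm] at this
    linarith
  rw [hfactor, abs_mul, abs_mul, abs_two]
  nlinarith [abs_nonneg (l₂ - k₂ : ℝ)]

-- `e^{itΔ}` multiplies `e^{ikx}` by `e^{-itk²}`, so the product of the evolved plane waves with
-- frequencies `p.1`, `p.2` oscillates in time at this frequency.
def pairTimeFreq (p : ℤ × ℤ) : ℝ := -((p.1 : ℝ) ^ 2 + (p.2 : ℝ) ^ 2)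

lemma exp_neg_sq_pairTimeFreq_sub_le {N₁ N₂ : ℝ} (hN₁ : 0 < N₁) (hN : 8 * N₂ ≤ N₁)
    {p q : ℤ × ℤ} (hp : N₁ / 2 ≤ |(p.1 : ℝ)|) (hq : |(q.2 : ℝ)| ≤ 2 * N₂)
    (hpq : p.1 + p.2 = q.1 + q.2) :
    rexp (-(1 / N₁ * (pairTimeFreq p - pairTimeFreq q)) ^ 2 / 4)
      ≤ rexp (-((q.2 - p.2 : ℤ) : ℝ) ^ 2 / 16) := by
  have hΔ : pairTimeFreq p - pairTimeFreq q = (q.1 : ℝ) ^ 2 + q.2 ^ 2 - (p.1 ^ 2 + p.2 ^ 2) := by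
    simp only [pairTimeFreq]; ring
  have hgap : |((q.2 - p.2 : ℤ) : ℝ)| / 2 ≤ |1 / N₁ * (pairTimeFreq p - pairTimeFreq q)| := by
    rw [abs_mul, abs_of_pos (one_div_pos.mpr hN₁), hΔ, Int.cast_sub, one_div_mul_eq_div,
      div_le_div_iff₀ two_pos hN₁]
    linarith [mul_abs_sub_le_two_mul_abs_sq_add_sq_sub hN hp hq hpq]
  have := pow_le_pow_left₀ (by positivity) hgap 2
  rw [div_pow, sq_abs, sq_abs] at this
  rw [exp_le_exp]
  linarith

lemma sum_fiber_exp_neg_sq_pairTimeFreq_le {N₁ N₂ : ℝ} (hN₁ : 0 < N₁) (hN : 8 * N₂ ≤ N₁)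
    {s₁ s₂ : Finset ℤ} (h₁ : ∀ k ∈ s₁, N₁ / 2 ≤ |(k : ℝ)|) (h₂ : ∀ k ∈ s₂, |(k : ℝ)| ≤ 2 * N₂)
    (m : ℤ) {p : ℤ × ℤ} (hp : p ∈ s₁ ×ˢ s₂) (hpm : p.1 + p.2 = m) :
    ∑ q ∈ s₁ ×ˢ s₂ with q.1 + q.2 = m,
        rexp (-(1 / N₁ * (pairTimeFreq p - pairTimeFreq q)) ^ 2 / 4)
      ≤ ∑' d : ℤ, rexp (-(d : ℝ) ^ 2 / 16) := by
  set F := {q ∈ s₁ ×ˢ s₂ | q.1 + q.2 = m}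
  have hinj : Set.InjOn (fun q : ℤ × ℤ ↦ q.2 - p.2) F := by
    intro q hq q' hq' h
    have := (mem_filter.mp hq).2
    have := (mem_filter.mp hq').2
    simp only at h
    ext <;> omega
  calc _ ≤ ∑ q ∈ F, rexp (-((q.2 - p.2 : ℤ) : ℝ) ^ 2 / 16) := by
        refine sum_le_sum fun q hq ↦ ?_
        obtain ⟨hq, hqm⟩ := mem_filter.mp hq
        exact exp_neg_sq_pairTimeFreq_sub_le hN₁ hN (h₁ _ (mem_product.mp hp).1)
          (h₂ _ (mem_product.mp hq).2) (hpm.trans hqm.symm)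
    _ = ∑ d ∈ F.image (fun q ↦ q.2 - p.2), rexp (-(d : ℝ) ^ 2 / 16) := by
        rw [sum_image hinj]
    _ ≤ _ := summable_exp_neg_int_sq_div_sixteen.sum_le_tsum _ fun _ _ ↦ (exp_pos _).le

section Schrodinger

variable {a a₁ a₂ : ℤ → ℂ} {s s₁ s₂ : Finset ℤ}

lemma evol_eq_sum (hs : ∀ k ∉ s, a k = 0) (t x : ℝ) :
    evol a t x = ∑ k ∈ s, a k * cexp (I * ((k * x - t * k ^ 2 : ℝ) : ℂ)) :=
  tsum_eq_sum fun k hk ↦ by rw [hs k hk, zero_mul]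

lemma l2nsq_eq_sum (hs : ∀ k ∉ s, a k = 0) : l2nsq a = 2 * π * ∑ k ∈ s, ‖a k‖ ^ 2 := by
  rw [l2nsq, ← intervalIntegral.integral_of_le (by positivity), ← integral_norm_sq_sum_fourier]
  congr 1 with x
  rw [evol_eq_sum hs]
  congr 2
  refine sum_congr rfl fun k _ ↦ ?_
  push_cast
  ring_nf

lemma evol_mul_evol_eq_sum (hs₁ : ∀ k ∉ s₁, a₁ k = 0) (hs₂ : ∀ k ∉ s₂, a₂ k = 0) (t x : ℝ) :
    evol a₁ t x * evol a₂ t x = ∑ p ∈ s₁ ×ˢ s₂,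
      a₁ p.1 * a₂ p.2 * cexp ((pairTimeFreq p * t : ℝ) * I)
        * cexp ((((p.1 + p.2 : ℤ) : ℝ) * x : ℝ) * I) := by
  rw [evol_eq_sum hs₁, evol_eq_sum hs₂, sum_mul_sum, sum_product]
  refine sum_congr rfl fun k _ ↦ sum_congr rfl fun l _ ↦ ?_
  simp only [pairTimeFreq]
  rw [mul_mul_mul_comm, ← Complex.exp_add, mul_assoc (a₁ k * a₂ l), ← Complex.exp_add]
  congr 2
  push_cast
  ring

lemma integral_norm_sq_evol_mul_evol (hs₁ : ∀ k ∉ s₁, a₁ k = 0) (hs₂ : ∀ k ∉ s₂, a₂ k = 0)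
    (t : ℝ) :
    ∫ x in Set.Ioc 0 (2 * π), ‖evol a₁ t x * evol a₂ t x‖ ^ 2
      = 2 * π * ∑ m ∈ (s₁ ×ˢ s₂).image (fun p ↦ p.1 + p.2),
          ‖∑ p ∈ s₁ ×ˢ s₂ with p.1 + p.2 = m,
            a₁ p.1 * a₂ p.2 * cexp ((pairTimeFreq p * t : ℝ) * I)‖ ^ 2 := by
  rw [← intervalIntegral.integral_of_le (by positivity)]
  simp_rw [evol_mul_evol_eq_sum hs₁ hs₂ t]
  exact integral_norm_sq_sum_fourier_fiberwise (s₁ ×ˢ s₂) (fun p ↦ p.1 + p.2)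
    fun p ↦ a₁ p.1 * a₂ p.2 * cexp ((pairTimeFreq p * t : ℝ) * I)

end Schrodinger

theorem integral_norm_sq_evol_mul_evol_le {N₁ N₂ : ℝ} (hN₁ : 0 < N₁) (hN : 8 * N₂ ≤ N₁)
    {a₁ a₂ : ℤ → ℂ} {s₁ s₂ : Finset ℤ} (hs₁ : ∀ k ∉ s₁, a₁ k = 0) (hs₂ : ∀ k ∉ s₂, a₂ k = 0)
    (h₁ : ∀ k ∈ s₁, N₁ / 2 ≤ |(k : ℝ)|) (h₂ : ∀ k ∈ s₂, |(k : ℝ)| ≤ 2 * N₂) :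
    ∫ t in Set.Ioc 0 (1 / N₁), ∫ x in Set.Ioc 0 (2 * π), ‖evol a₁ t x * evol a₂ t x‖ ^ 2
      ≤ rexp 1 * √π * (∑' d : ℤ, rexp (-(d : ℝ) ^ 2 / 16)) / (2 * π) * (1 / N₁)
          * l2nsq a₁ * l2nsq a₂ := by
  set K := ∑' d : ℤ, rexp (-(d : ℝ) ^ 2 / 16)
  set P := s₁ ×ˢ s₂
  set A : ℤ × ℤ → ℂ := fun p ↦ a₁ p.1 * a₂ p.2
  set B : ℤ → ℝ → ℝ := fun m t ↦
    ‖∑ p ∈ P with p.1 + p.2 = m, A p * cexp ((pairTimeFreq p * t : ℝ) * I)‖ ^ 2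
  have hT : 0 < 1 / N₁ := by positivity
  have hfiber (m : ℤ) : ∫ t in (0 : ℝ)..1 / N₁, B m t
      ≤ rexp 1 * √π * (1 / N₁) * K * ∑ p ∈ P with p.1 + p.2 = m, ‖A p‖ ^ 2 :=
    integral_norm_sq_sum_cexp_le _ A pairTimeFreq hT fun p hp ↦
      sum_fiber_exp_neg_sq_pairTimeFreq_le hN₁ hN h₁ h₂ m (mem_filter.mp hp).1 (mem_filter.mp hp).2
  have hA : ∑ p ∈ P, ‖A p‖ ^ 2 = (∑ k ∈ s₁, ‖a₁ k‖ ^ 2) * ∑ k ∈ s₂, ‖a₂ k‖ ^ 2 := by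
    simp only [P, A, sum_product, sum_mul_sum, norm_mul, mul_pow]
  calc ∫ t in Set.Ioc 0 (1 / N₁), ∫ x in Set.Ioc 0 (2 * π), ‖evol a₁ t x * evol a₂ t x‖ ^ 2
      = 2 * π * ∑ m ∈ P.image (fun p ↦ p.1 + p.2), ∫ t in (0 : ℝ)..1 / N₁, B m t := by
        simp_rw [integral_norm_sq_evol_mul_evol hs₁ hs₂]
        rw [integral_const_mul, ← intervalIntegral.integral_of_le hT.le,
          intervalIntegral.integral_finsetSum fun m _ ↦
            (by fun_prop : Continuous (B m)).intervalIntegrable _ _]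
    _ ≤ 2 * π * ∑ m ∈ P.image (fun p ↦ p.1 + p.2),
          rexp 1 * √π * (1 / N₁) * K * ∑ p ∈ P with p.1 + p.2 = m, ‖A p‖ ^ 2 := by
        gcongr with m
        exact hfiber m
    _ = rexp 1 * √π * K / (2 * π) * (1 / N₁) * l2nsq a₁ * l2nsq a₂ := by
        rw [← mul_sum, sum_fiberwise_of_maps_to fun p hp ↦ mem_image_of_mem _ hp, hA,
          l2nsq_eq_sum hs₁, l2nsq_eq_sum hs₂]
        field_simp

lemma exists_finset_of_support_abs_le {a : ℤ → ℂ} {lo hi : ℝ}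
    (h : ∀ k, a k ≠ 0 → lo ≤ |(k : ℝ)| ∧ |(k : ℝ)| ≤ hi) :
    ∃ s : Finset ℤ, (∀ k ∉ s, a k = 0) ∧ ∀ k ∈ s, lo ≤ |(k : ℝ)| ∧ |(k : ℝ)| ≤ hi := by
  refine ⟨{k ∈ Icc (-⌈hi⌉) ⌈hi⌉ | a k ≠ 0}, fun k hk ↦ ?_, fun k hk ↦ h k (mem_filter.mp hk).2⟩
  by_contra hak
  refine hk (mem_filter.mpr ⟨mem_Icc.mpr (abs_le.mp ?_), hak⟩)
  exact Int.cast_le.mp ((Int.cast_abs (R := ℝ)).symm ▸ (h k hak).2.trans (Int.le_ceil hi))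

theorem stmt5 :
    ∃ C₀ : ℝ, 1 ≤ C₀ ∧ ∃ C : ℝ, 0 < C ∧
      ∀ N₁ N₂ : ℕ, (∃ n : ℕ, N₁ = 2 ^ n) → (∃ n : ℕ, N₂ = 2 ^ n) →
        (N₁ : ℝ) ≥ C₀ * (N₂ : ℝ) →
      ∀ a₁ a₂ : ℤ → ℂ,
        (∀ k : ℤ, a₁ k ≠ 0 → (N₁ : ℝ) / 2 ≤ |(k : ℝ)| ∧ |(k : ℝ)| ≤ 2 * N₁) →
        (∀ k : ℤ, a₂ k ≠ 0 → (N₂ : ℝ) / 2 ≤ |(k : ℝ)| ∧ |(k : ℝ)| ≤ 2 * N₂) →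
        (∫ t in Set.Ioc (0 : ℝ) (1 / (N₁ : ℝ)), ∫ x in Set.Ioc (0 : ℝ) (2 * π),
            ‖evol a₁ t x * evol a₂ t x‖ ^ 2) ^ ((1 : ℝ) / 2)
          ≤ C * (N₁ : ℝ) ^ (-(1 : ℝ) / 2) *
            (l2nsq a₁) ^ ((1 : ℝ) / 2) * (l2nsq a₂) ^ ((1 : ℝ) / 2) := by
  set c := rexp 1 * √π * (∑' d : ℤ, rexp (-(d : ℝ) ^ 2 / 16)) / (2 * π)
  have hc : 0 < c := by
    have := summable_exp_neg_int_sq_div_sixteen.tsum_pos (fun d ↦ (exp_pos _).le) 0 (exp_pos _)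
    positivity
  refine ⟨8, by norm_num, c ^ ((1 : ℝ) / 2), by positivity, ?_⟩
  rintro N₁ N₂ ⟨n, hn⟩ - hN a₁ a₂ h₁ h₂
  obtain ⟨s₁, hs₁, hb₁⟩ := exists_finset_of_support_abs_le h₁
  obtain ⟨s₂, hs₂, hb₂⟩ := exists_finset_of_support_abs_le h₂
  have hN₁ : (0 : ℝ) < N₁ := by rw [hn]; positivity
  have hl₁ : 0 ≤ l2nsq a₁ := by rw [l2nsq_eq_sum hs₁]; positivity
  have hl₂ : 0 ≤ l2nsq a₂ := by rw [l2nsq_eq_sum hs₂]; positivity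
  calc _ ≤ (c * (1 / (N₁ : ℝ)) * l2nsq a₁ * l2nsq a₂) ^ ((1 : ℝ) / 2) := by
        refine rpow_le_rpow (setIntegral_nonneg measurableSet_Ioc fun t _ ↦
          setIntegral_nonneg measurableSet_Ioc fun x _ ↦ by positivity) ?_ (by norm_num)
        exact integral_norm_sq_evol_mul_evol_le hN₁ hN hs₁ hs₂ (fun k hk ↦ (hb₁ k hk).1)
          fun k hk ↦ (hb₂ k hk).2
    _ = _ := by
        rw [mul_rpow (by positivity) hl₂, mul_rpow (by positivity) hl₁,
          mul_rpow hc.le (by positivity), div_rpow zero_le_one hN₁.le, one_rpow,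
          one_div ((N₁ : ℝ) ^ _), ← rpow_neg hN₁.le, neg_div]

end
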